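/- Let E be a Hilbert C*-module over a C*-algebra A and let S : E → E be a bounded linear operator such that S∘K ∈ K(E) for every K ∈ K(E) (S is a left multiplier of K(E) inside B(E)). Then S is an A-module map: S(ξa) = S(ξ)a for all ξ ∈ E, a ∈ A. Hence LM_E(K(E)) = End_A(E). -/

import Mathlib

open scoped InnerProductSpace RightActions
open Filter Topology

/-- The Hilbert C⋆-module class as it stood in Mathlib (December 2024): a right `A`-module
(action of `Aᵐᵒᵖ`) with `⟪x, y <• a⟫ = ⟪x, y⟫ * a`. -/
class CStarModuleRight (A E : Type*) [NonUnitalSemiring A] [StarRing A]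
    [Module ℂ A] [AddCommGroup E] [Module ℂ E] [PartialOrder A] [SMul Aᵐᵒᵖ E] [Norm A] [Norm E]
    extends Inner A E where
  inner_add_right {x} {y} {z} : inner x (y + z) = inner x y + inner x z
  inner_self_nonneg {x} : 0 ≤ inner x x
  inner_self {x} : inner x x = 0 ↔ x = 0
  inner_op_smul_right {a : A} {x y : E} : inner x (y <• a) = inner x y * a
  inner_smul_right_complex {z : ℂ} {x} {y} : inner x (z • y) = z • inner x y
  star_inner x y : star (inner x y) = inner y x
  norm_eq_sqrt_norm_inner_self x : ‖x‖ = √‖inner x x‖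

section Defs

variable (A : Type*) (E : Type*) [NonUnitalCStarAlgebra A] [PartialOrder A] [StarOrderedRing A]
  [NormedAddCommGroup E] [NormedSpace ℂ E] [SMul Aᵐᵒᵖ E] [CStarModuleRight A E]

/-- An operator on a Hilbert C*-module is *adjointable* if it admits an adjoint with respect to
the `A`-valued inner product. -/
def Adjointable (T : E →L[ℂ] E) : Prop :=
  ∃ S : E →L[ℂ] E, ∀ x y : E, ⟪T x, y⟫_A = ⟪x, S y⟫_A

/-- `EJ A E J` is the closed linear span `E(J)` of `{ξ • a : ξ ∈ E, a ∈ J}`. -/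
noncomputable def EJ (J : Set A) : Submodule ℂ E :=
  (Submodule.span ℂ {y : E | ∃ ξ : E, ∃ a ∈ J, y = ξ <• a}).topologicalClosure

/-- `JM A E M` is the closed linear span `J(M)` of `{⟪η, m⟫ : η ∈ E, m ∈ M}`. -/
noncomputable def JM (M : Set E) : Submodule ℂ A :=
  (Submodule.span ℂ {a : A | ∃ η : E, ∃ m ∈ M, a = ⟪η, m⟫_A}).topologicalClosure

/-- `BS A E` is the C*-algebra `B`, the closure of the linear span of all inner products. -/
noncomputable def BS : Set A :=
  closure (Submodule.span ℂ {a : A | ∃ η ξ : E, a = ⟪η, ξ⟫_A} : Set A)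

/-- `KE A E` is `K(E)`, the closed (non-unital) algebra generated by the rank-one operators
`θ_{η,ξ} : x ↦ η • ⟪ξ, x⟫`. -/
noncomputable def KE : NonUnitalSubalgebra ℂ (E →L[ℂ] E) :=
  (NonUnitalAlgebra.adjoin ℂ
    {T : E →L[ℂ] E | ∃ η ξ : E, ∀ x : E, T x = η <• ⟪ξ, x⟫_A}).topologicalClosure

end Defs

variable {A E : Type*} [NonUnitalCStarAlgebra A] [PartialOrder A] [StarOrderedRing A]
  [NormedAddCommGroup E] [NormedSpace ℂ E] [SMul Aᵐᵒᵖ E] [CStarModuleRight A E]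

/-!
Every element of `K(E)` commutes with the right actions `x ↦ x <• a`: the rank-one operators do,
and the commutant of a set is a closed subalgebra. If `S` is a left multiplier of `K(E)`, then
`θ_{ξ,ξ}` and `S ∘ θ_{ξ,ξ}` both lie in `K(E)`, so `S` commutes with the right actions on the range
of `θ_{ξ,ξ}`, and hence on its closure, which contains `ξ`: with `a = ⟪ξ, ξ⟫` and
`c = a² (a² + s²)⁻¹ = a · a (a² + s²)⁻¹`, one has `ξ <• c ∈ range θ_{ξ,ξ}` and
`‖ξ - ξ <• c‖² = ‖a (1 - c)²‖ ≤ s / 2`.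
Conversely, if `S` is an `A`-module map then `S ∘ θ_{η,ξ} = θ_{Sη,ξ}`, so left multiplication by `S`
preserves the algebra generated by the rank-one operators and, by continuity, its closure `K(E)`.
-/

lemma NonUnitalAlgebra.mul_mem_adjoin {R B : Type*} [CommSemiring R] [NonUnitalSemiring B]
    [Module R B] [IsScalarTower R B B] [SMulCommClass R B B] {s : Set B} {S T : B}
    (hS : ∀ g ∈ s, S * g ∈ adjoin R s) (hT : T ∈ adjoin R s) : S * T ∈ adjoin R s := by
  induction hT using NonUnitalAlgebra.adjoin_induction with
  | mem g hg => exact hS g hg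
  | add T U _ _ hT hU => simpa only [mul_add] using add_mem hT hU
  | zero => simp only [mul_zero, zero_mem]
  | mul T U _ hU hT _ => simpa only [← mul_assoc] using mul_mem hT hU
  | smul r T _ hT => simpa only [mul_smul_comm] using SMulMemClass.smul_mem r hT

lemma NonUnitalSubalgebra.mul_mem_topologicalClosure {R B : Type*} [CommSemiring R]
    [NonUnitalSemiring B] [Module R B] [TopologicalSpace B] [IsTopologicalSemiring B]
    [ContinuousConstSMul R B] {C : NonUnitalSubalgebra R B} {S T : B}
    (hS : ∀ U ∈ C, S * U ∈ C) (hT : T ∈ C.topologicalClosure) : S * T ∈ C.topologicalClosure :=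
  map_mem_closure (continuous_const_mul S) hT hS

lemma cfcₙ_mul_one_sub_sq {A : Type*} [NonUnitalCStarAlgebra A] (a : A) (ha : IsSelfAdjoint a)
    {g : ℝ → ℝ} (hg : Continuous g) (hg0 : g 0 = 0) :
    cfcₙ (fun t => t * (1 - g t) ^ 2) a = (a - a * cfcₙ g a) - cfcₙ g a * (a - a * cfcₙ g a) := by
  rw [cfcₙ_congr (g := fun t => (t - t * g t) - g t * (t - t * g t)) fun t _ => by ring,
    cfcₙ_sub _ _ a, cfcₙ_mul g _ a, cfcₙ_sub _ _ a, cfcₙ_mul _ g a, cfcₙ_id' ℝ a]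

lemma mul_one_sub_sq_div_le {t s : ℝ} (ht : 0 ≤ t) (hs : 0 < s) :
    t * (1 - t ^ 2 / (t ^ 2 + s ^ 2)) ^ 2 ≤ s / 2 := by
  have hd : 0 < t ^ 2 + s ^ 2 := by positivity
  rw [one_sub_div hd.ne', add_sub_cancel_left, div_pow, mul_div_assoc',
    div_le_div_iff₀ (by positivity) two_pos]
  nlinarith [mul_nonneg hs.le (mul_nonneg hd.le (sq_nonneg (t - s))),
    mul_nonneg (pow_nonneg ht 3) (sq_nonneg s)]

section

variable {A E : Type*} [NonUnitalCStarAlgebra A] [PartialOrder A] [NormedAddCommGroup E]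
  [NormedSpace ℂ E] [SMul Aᵐᵒᵖ E] [CStarModuleRight A E]

namespace CStarModuleRight

/-- A right Hilbert `A`-module is a Hilbert C⋆-module over `Aᵐᵒᵖ` in Mathlib's sense; this is how
the Cauchy–Schwarz inequality and the sesquilinearity of the inner product are obtained here. -/
instance toCStarModuleMulOpposite : CStarModule Aᵐᵒᵖ E where
  inner x y := MulOpposite.op ⟪x, y⟫_A
  inner_add_right := congrArg MulOpposite.op inner_add_right
  inner_self_nonneg := MulOpposite.unop_le_unop.mp inner_self_nonneg
  inner_self := MulOpposite.op_eq_zero_iff _ |>.trans inner_self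
  inner_op_smul_right := congrArg MulOpposite.op inner_op_smul_right
  inner_smul_right_complex := congrArg MulOpposite.op inner_smul_right_complex
  star_inner x y := congrArg MulOpposite.op (star_inner x y)
  norm_eq_sqrt_norm_inner_self := norm_eq_sqrt_norm_inner_self (A := A)

lemma inner_sub_right {x y z : E} : ⟪x, y - z⟫_A = ⟪x, y⟫_A - ⟪x, z⟫_A :=
  congrArg MulOpposite.unop (CStarModule.inner_sub_right (A := Aᵐᵒᵖ) (x := x) (y := y) (z := z))

lemma inner_sub_left {x y z : E} : ⟪x - y, z⟫_A = ⟪x, z⟫_A - ⟪y, z⟫_A :=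
  congrArg MulOpposite.unop (CStarModule.inner_sub_left (A := Aᵐᵒᵖ) (x := x) (y := y) (z := z))

lemma inner_op_smul_left {a : A} {x y : E} : ⟪x <• a, y⟫_A = star a * ⟪x, y⟫_A :=
  congrArg MulOpposite.unop
    (CStarModule.inner_op_smul_left (A := Aᵐᵒᵖ) (a := .op a) (x := x) (y := y))

lemma norm_sq_eq (x : E) : ‖x‖ ^ 2 = ‖⟪x, x⟫_A‖ :=
  CStarModule.norm_sq_eq Aᵐᵒᵖ (x := x)

lemma ext_inner_left {x y : E} (h : ∀ z : E, ⟪z, x⟫_A = ⟪z, y⟫_A) : x = y := by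
  rw [← sub_eq_zero, ← inner_self (A := A), inner_sub_right, h, sub_self]

lemma add_op_smul (x y : E) (a : A) : (x + y) <• a = x <• a + y <• a :=
  ext_inner_left (A := A) fun z => by simp only [inner_op_smul_right, inner_add_right, add_mul]

lemma smul_op_smul (c : ℂ) (x : E) (a : A) : (c • x) <• a = c • (x <• a) :=
  ext_inner_left (A := A) fun z => by
    simp only [inner_op_smul_right, inner_smul_right_complex, smul_mul_assoc]

lemma op_smul_add (x : E) (a b : A) : x <• (a + b) = x <• a + x <• b :=
  ext_inner_left (A := A) fun z => by simp only [inner_op_smul_right, inner_add_right, mul_add]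

lemma op_smul_smul (x : E) (c : ℂ) (a : A) : x <• (c • a) = c • (x <• a) :=
  ext_inner_left (A := A) fun z => by
    simp only [inner_op_smul_right, inner_smul_right_complex, mul_smul_comm]

lemma op_smul_op_smul (x : E) (a b : A) : x <• a <• b = x <• (a * b) :=
  ext_inner_left (A := A) fun z => by simp only [inner_op_smul_right, mul_assoc]

lemma norm_op_smul_le (x : E) (a : A) : ‖x <• a‖ ≤ ‖x‖ * ‖a‖ := by
  refine le_of_sq_le_sq ?_ (by positivity)
  calc ‖x <• a‖ ^ 2 = ‖star a * ⟪x, x⟫_A * a‖ := by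
        rw [norm_sq_eq (A := A), inner_op_smul_right, inner_op_smul_left]
    _ ≤ ‖a‖ * ‖x‖ ^ 2 * ‖a‖ := by
        grw [norm_mul_le, norm_mul_le, norm_star, norm_sq_eq (A := A)]
    _ = (‖x‖ * ‖a‖) ^ 2 := by ring

noncomputable def opSMulCLM (a : A) : E →L[ℂ] E :=
  LinearMap.mkContinuous
    { toFun x := x <• a
      map_add' x y := add_op_smul x y a
      map_smul' c x := smul_op_smul c x a } ‖a‖
    fun x => (norm_op_smul_le x a).trans_eq (mul_comm _ _)

@[simp] lemma opSMulCLM_apply (a : A) (x : E) : opSMulCLM (E := E) a x = x <• a := rfl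

lemma KE_le_centralizer_range_opSMulCLM :
    KE A E ≤ NonUnitalSubalgebra.centralizer ℂ (Set.range (opSMulCLM (A := A) (E := E))) := by
  refine (NonUnitalSubalgebra.topologicalClosure_adjoin_le_centralizer_centralizer ℂ _).trans ?_
  refine Set.centralizer_subset ?_
  rintro _ ⟨a, rfl⟩ T ⟨η, ξ, hT⟩
  ext x
  simp only [mul_apply_eq_comp, opSMulCLM_apply, hT, inner_op_smul_right, op_smul_op_smul]

lemma norm_sub_op_smul_cfcₙ_sq (ξ : E) {g : ℝ → ℝ} (hg : Continuous g) (hg0 : g 0 = 0) :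
    ‖ξ - ξ <• cfcₙ g ⟪ξ, ξ⟫_A‖ ^ 2 = ‖cfcₙ (fun t => t * (1 - g t) ^ 2) ⟪ξ, ξ⟫_A‖ := by
  have ha : IsSelfAdjoint ⟪ξ, ξ⟫_A := star_inner ξ ξ
  rw [norm_sq_eq (A := A), cfcₙ_mul_one_sub_sq _ ha hg hg0]
  congr 1
  simp only [inner_sub_left, inner_sub_right, inner_op_smul_left, inner_op_smul_right,
    (cfcₙ_predicate g ⟪ξ, ξ⟫_A).star_eq]
  noncomm_ring

end CStarModuleRight

end

namespace CStarModuleRight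

noncomputable def rankOne (η ξ : E) : E →L[ℂ] E :=
  LinearMap.mkContinuous
    { toFun x := η <• ⟪ξ, x⟫_A
      map_add' x y := by simp only [inner_add_right, op_smul_add]
      map_smul' c x := by simp only [inner_smul_right_complex, op_smul_smul, RingHom.id_apply] }
    (‖η‖ * ‖ξ‖) fun x => calc
      ‖η <• ⟪ξ, x⟫_A‖ ≤ ‖η‖ * ‖⟪ξ, x⟫_A‖ := norm_op_smul_le η _
      _ ≤ ‖η‖ * (‖ξ‖ * ‖x‖) := by gcongr; exact CStarModule.norm_inner_le (A := Aᵐᵒᵖ) E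
      _ = ‖η‖ * ‖ξ‖ * ‖x‖ := by ring

@[simp] lemma rankOne_apply (η ξ x : E) : rankOne (A := A) η ξ x = η <• ⟪ξ, x⟫_A := rfl

lemma rankOne_mem_KE (η ξ : E) : rankOne (A := A) η ξ ∈ KE A E :=
  NonUnitalSubalgebra.le_topologicalClosure _ <|
    NonUnitalAlgebra.subset_adjoin ℂ ⟨η, ξ, fun _ => rfl⟩

lemma mem_closure_range_rankOne_self (ξ : E) :
    ξ ∈ closure (Set.range (rankOne (A := A) ξ ξ)) := by
  rw [Metric.mem_closure_iff]
  intro ε hε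
  set a := ⟪ξ, ξ⟫_A
  have ha : 0 ≤ a := inner_self_nonneg
  set s := ε ^ 2
  have hs : 0 < s := by positivity
  have hd : ∀ t : ℝ, t ^ 2 + s ^ 2 ≠ 0 := fun t => by positivity
  set f : ℝ → ℝ := fun t => t / (t ^ 2 + s ^ 2)
  set g : ℝ → ℝ := fun t => t ^ 2 / (t ^ 2 + s ^ 2)
  have hf : Continuous f := by fun_prop (disch := exact hd _)
  have hg : Continuous g := by fun_prop (disch := exact hd _)
  have hmul : a * cfcₙ f a = cfcₙ g a := by
    rw [cfcₙ_congr (f := g) (g := fun t => t * f t) fun t _ => by simp only [f, g]; ring,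
      cfcₙ_mul (fun t => t) f a, cfcₙ_id' ℝ a]
  refine ⟨_, ⟨ξ <• cfcₙ f a, rfl⟩, ?_⟩
  rw [rankOne_apply, inner_op_smul_right, hmul, dist_eq_norm]
  refine lt_of_pow_lt_pow_left₀ 2 hε.le ?_
  rw [norm_sub_op_smul_cfcₙ_sq ξ hg (by simp [g])]
  calc _ ≤ s / 2 := norm_cfcₙ_le fun t ht => by
          have ht0 : 0 ≤ t := quasispectrum_nonneg_of_nonneg a ha t ht
          rw [Real.norm_of_nonneg (by positivity)]
          exact mul_one_sub_sq_div_le ht0 hs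
    _ < ε ^ 2 := by linarith

lemma map_op_smul_of_mul_rankOne_self_mem_KE {S : E →L[ℂ] E} {ξ : E}
    (hS : S * rankOne (A := A) ξ ξ ∈ KE A E) (a : A) : S (ξ <• a) = S ξ <• a := by
  set θ := rankOne (A := A) ξ ξ
  set R := opSMulCLM (E := E) a
  have hθ : R * θ = θ * R := KE_le_centralizer_range_opSMulCLM (rankOne_mem_KE ξ ξ) R ⟨a, rfl⟩
  have hSθ : R * (S * θ) = S * θ * R := KE_le_centralizer_range_opSMulCLM hS R ⟨a, rfl⟩
  have hEqOn : Set.EqOn (S * R) (R * S) (Set.range θ) := by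
    rintro _ ⟨x, rfl⟩
    change (S * R * θ) x = (R * S * θ) x
    rw [mul_assoc, hθ, ← mul_assoc, ← hSθ, mul_assoc]
  exact hEqOn.closure (map_continuous _) (map_continuous _) (mem_closure_range_rankOne_self ξ)

end CStarModuleRight

open CStarModuleRight

/-- A bounded operator `S` on `E` is a left multiplier of `K(E)` (i.e. `S ∘ K ∈ K(E)` for all
`K ∈ K(E)`) if and only if `S` is an `A`-module map; hence `LM_E(K(E)) = End_A(E)`. -/
theorem LM_KE_eq_End :
    {S : E →L[ℂ] E | ∀ K ∈ KE A E, S ∘L K ∈ KE A E} =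
      {S : E →L[ℂ] E | ∀ (ξ : E) (a : A), S (ξ <• a) = S ξ <• a} := by
  ext S
  constructor
  · intro hS ξ
    exact map_op_smul_of_mul_rankOne_self_mem_KE (hS _ (rankOne_mem_KE ξ ξ))
  · intro hS K hK
    refine NonUnitalSubalgebra.mul_mem_topologicalClosure (fun T hT => ?_) hK
    refine NonUnitalAlgebra.mul_mem_adjoin (fun g ⟨η, ξ, hg⟩ => ?_) hT
    exact NonUnitalAlgebra.subset_adjoin ℂ ⟨S η, ξ, fun x => by
      rw [mul_apply_eq_comp, hg, hS]⟩
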